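/- arXiv:2408.05519 — 2 statements merged into one kernel-verified Lean document; each statement's English description precedes it below -/
import Mathlib

section
/- For every integer n ≥ 1, the odd cycle C_{2n+1} (the cycle graph on 2n+1 vertices) is [n]-edge geodetic, and the minimum number of n-geodesics needed to cover all edges of C_{2n+1} is 3, i.e. |gen(C_{2n+1})| = 3. -/
open SimpleGraph

/-- A walk is a `k`-geodesic if it has length `k` and is a shortest path
between its endpoints. -/
def IsKGeodesic {V : Type*} (G : SimpleGraph V) (k : ℕ) {u v : V} (w : G.Walk u v) : Prop :=
  w.length = k ∧ G.dist u v = k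

/-- A graph is `k`-edge geodetic if every edge lies on some `k`-geodesic. -/
def IsEdgeGeodetic {V : Type*} (G : SimpleGraph V) (k : ℕ) : Prop :=
  ∀ e ∈ G.edgeSet, ∃ (u v : V) (w : G.Walk u v), IsKGeodesic G k w ∧ e ∈ w.edges

/-- A graph is `[k]`-edge geodetic if it is `k`-edge geodetic but not `(k+1)`-edge geodetic. -/
def IsMaxEdgeGeodetic {V : Type*} (G : SimpleGraph V) (k : ℕ) : Prop :=
  IsEdgeGeodetic G k ∧ ¬ IsEdgeGeodetic G (k + 1)

/-- `genNum G k` is the minimum number of `k`-geodesics of `G` whose edges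
together cover all edges of `G`. -/
noncomputable def genNum {V : Type*} (G : SimpleGraph V) (k : ℕ) : ℕ :=
  sInf {r : ℕ | ∃ f : Fin r → Σ u : V, Σ v : V, G.Walk u v,
    (∀ i, IsKGeodesic G k (f i).2.2) ∧
    ∀ e ∈ G.edgeSet, ∃ i, e ∈ (f i).2.2.edges}

/-! In a cycle `C_{N+1}` the distance from `u` to `v` is the circular norm `min d (N + 1 - d)` of
`d = v - u`: arcs of consecutive edges give the upper bound, and the lower bound holds because
the circular norm changes by at most one along an edge. In `C_{2n+1}` every distance is therefore
at most `n`, so there is no `(n+1)`-geodesic, while every arc of `n` edges is an `n`-geodesic.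
The three arcs of length `n` starting at `0`, `n` and `2n` cover all `2n+1` edges, and two
`n`-geodesics cover at most `2n` of them. -/

open Fin.CommRing

def IsGeodesicCover {V : Type*} (G : SimpleGraph V) (k : ℕ) {r : ℕ}
    (f : Fin r → Σ u : V, Σ v : V, G.Walk u v) : Prop :=
  (∀ i, IsKGeodesic G k (f i).2.2) ∧ ∀ e ∈ G.edgeSet, ∃ i, e ∈ (f i).2.2.edges

section GeodesicCover

variable {V : Type*} {G : SimpleGraph V} {k r : ℕ} {f : Fin r → Σ u : V, Σ v : V, G.Walk u v}

theorem IsGeodesicCover.isEdgeGeodetic (hf : IsGeodesicCover G k f) : IsEdgeGeodetic G k := by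
  intro e he
  obtain ⟨i, hi⟩ := hf.2 e he
  exact ⟨_, _, (f i).2.2, hf.1 i, hi⟩

theorem IsGeodesicCover.genNum_le (hf : IsGeodesicCover G k f) : genNum G k ≤ r :=
  Nat.sInf_le ⟨f, hf⟩

theorem IsGeodesicCover.ncard_edgeSet_le (hf : IsGeodesicCover G k f) :
    G.edgeSet.ncard ≤ r * k := by
  classical
  set edges : Finset (Sym2 V) := Finset.univ.biUnion fun i => (f i).2.2.edges.toFinset
  have hsub : G.edgeSet ⊆ edges := by
    intro e he
    obtain ⟨i, hi⟩ := hf.2 e he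
    simpa [edges] using ⟨i, hi⟩
  have hlen (i : Fin r) : (f i).2.2.edges.toFinset.card ≤ k := by
    rw [← (hf.1 i).1, ← Walk.length_edges]
    exact List.toFinset_card_le _
  calc G.edgeSet.ncard ≤ edges.card := by simpa using Set.ncard_le_ncard hsub
    _ ≤ ∑ i, (f i).2.2.edges.toFinset.card := Finset.card_biUnion_le
    _ ≤ ∑ _i : Fin r, k := Finset.sum_le_sum fun i _ => hlen i
    _ = r * k := by simp

theorem IsGeodesicCover.ncard_edgeSet_le_genNum_mul (hf : IsGeodesicCover G k f) :
    G.edgeSet.ncard ≤ genNum G k * k := by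
  obtain ⟨g, hg⟩ := Nat.sInf_mem (s := {r | ∃ f : Fin r → _, IsGeodesicCover G k f}) ⟨r, f, hf⟩
  exact hg.ncard_edgeSet_le

end GeodesicCover

theorem not_isEdgeGeodetic_of_dist_lt {V : Type*} {G : SimpleGraph V} {k : ℕ}
    (hG : G.edgeSet.Nonempty) (hdist : ∀ u v, G.dist u v < k) : ¬ IsEdgeGeodetic G k := by
  intro h
  obtain ⟨e, he⟩ := hG
  obtain ⟨u, v, -, ⟨-, huv⟩, -⟩ := h e he
  exact (hdist u v).ne huv

theorem SimpleGraph.Walk.apply_le_apply_add_length {V : Type*} {G : SimpleGraph V} {f : V → ℕ}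
    (hf : ∀ x y, G.Adj x y → f x ≤ f y + 1) {u v : V} (w : G.Walk u v) :
    f u ≤ f v + w.length := by
  induction w with
  | nil => simp
  | cons h _ ih => rw [Walk.length_cons]; have := hf _ _ h; omega

namespace Fin

variable {N : ℕ}

def circNorm (a : Fin (N + 1)) : ℕ :=
  min a.val (N + 1 - a.val)

theorem circNorm_neg (a : Fin (N + 1)) : (-a).circNorm = a.circNorm := by
  unfold circNorm
  rw [Fin.val_neg]
  split_ifs with h
  · simp [h]
  · omega

theorem circNorm_add_one_le (a : Fin (N + 1)) : (a + 1).circNorm ≤ a.circNorm + 1 := by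
  unfold circNorm
  rw [Fin.val_add_one]
  split_ifs with h
  · simp
  · have : a.val ≠ N := fun h' => h (Fin.ext h')
    omega

theorem circNorm_sub_one_le (a : Fin (N + 1)) : (a - 1).circNorm ≤ a.circNorm + 1 := by
  rw [← circNorm_neg, neg_sub, sub_eq_neg_add, ← circNorm_neg a]
  exact circNorm_add_one_le _

end Fin

namespace SimpleGraph

variable {N : ℕ}

theorem cycleGraph_adj_add_one (hN : 1 ≤ N) (x : Fin (N + 1)) :
    (cycleGraph (N + 1)).Adj x (x + 1) :=
  cycleGraph_adj'.mpr <| .inr <| by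
    rw [add_sub_cancel_left, Fin.val_one', Nat.mod_eq_of_lt (by omega)]

theorem eq_add_one_or_eq_add_one_of_cycleGraph_adj {x y : Fin (N + 1)}
    (h : (cycleGraph (N + 1)).Adj x y) : x = y + 1 ∨ y = x + 1 := by
  have eq_one {a : Fin (N + 1)} (ha : a.val = 1) : a = 1 :=
    Fin.ext <| by rw [ha, Fin.val_one', Nat.mod_eq_of_lt (by have := a.isLt; omega)]
  rcases cycleGraph_adj'.mp h with h | h
  · exact .inl (sub_eq_iff_eq_add'.mp (eq_one h))
  · exact .inr (sub_eq_iff_eq_add'.mp (eq_one h))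

theorem exists_eq_mk_add_one_of_mem_edgeSet {e : Sym2 (Fin (N + 1))}
    (he : e ∈ (cycleGraph (N + 1)).edgeSet) : ∃ x, e = s(x, x + 1) := by
  induction e using Sym2.ind with
  | _ x y =>
    rcases eq_add_one_or_eq_add_one_of_cycleGraph_adj ((mem_edgeSet _).mp he) with h | h
    · exact ⟨y, by rw [h, Sym2.eq_swap]⟩
    · exact ⟨x, by rw [h]⟩

theorem ncard_edgeSet_cycleGraph (hN : 2 ≤ N) : (cycleGraph (N + 1)).edgeSet.ncard = N + 1 := by
  have hrange : (cycleGraph (N + 1)).edgeSet = Set.range fun x : Fin (N + 1) => s(x, x + 1) := by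
    ext e
    refine ⟨fun he => ?_, ?_⟩
    · obtain ⟨x, rfl⟩ := exists_eq_mk_add_one_of_mem_edgeSet he
      exact ⟨x, rfl⟩
    · rintro ⟨x, rfl⟩
      exact cycleGraph_adj_add_one (by omega) x
  have hinj : Function.Injective fun x : Fin (N + 1) => s(x, x + 1) := by
    intro x y hxy
    rcases Sym2.eq_iff.mp hxy with ⟨h, -⟩ | ⟨rfl, h⟩
    · exact h
    · have h2 : ((2 : ℕ) : Fin (N + 1)) = 0 := by push_cast; linear_combination h
      have := congrArg Fin.val h2
      rw [Fin.val_natCast, Nat.mod_eq_of_lt (by omega), Fin.val_zero] at this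
      omega
  rw [hrange, Set.ncard_range_of_injective hinj, Nat.card_eq_fintype_card, Fintype.card_fin]

theorem Walk.circNorm_le_length {u v : Fin (N + 1)} (w : (cycleGraph (N + 1)).Walk u v) :
    (v - u).circNorm ≤ w.length := by
  have hlip (x y : Fin (N + 1)) (h : (cycleGraph (N + 1)).Adj x y) :
      (x - v).circNorm ≤ (y - v).circNorm + 1 := by
    rcases eq_add_one_or_eq_add_one_of_cycleGraph_adj h with rfl | rfl
    · rw [add_sub_right_comm]
      exact Fin.circNorm_add_one_le _
    · rw [show x - v = x + 1 - v - 1 by ring]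
      exact Fin.circNorm_sub_one_le _
  have := w.apply_le_apply_add_length (f := fun x => (x - v).circNorm) hlip
  rwa [sub_self, ← neg_sub, Fin.circNorm_neg, show (0 : Fin (N + 1)).circNorm = 0 by
    simp [Fin.circNorm], zero_add] at this

def cycleWalk (hN : 1 ≤ N) (u : Fin (N + 1)) : (ℓ : ℕ) → (cycleGraph (N + 1)).Walk u (u + ℓ)
  | 0 => Walk.nil.copy rfl (by simp)
  | ℓ + 1 => (Walk.cons (cycleGraph_adj_add_one hN u) (cycleWalk hN (u + 1) ℓ)).copy rfl
      (by push_cast; ring)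

theorem length_cycleWalk (hN : 1 ≤ N) (u : Fin (N + 1)) (ℓ : ℕ) :
    (cycleWalk hN u ℓ).length = ℓ := by
  induction ℓ generalizing u with
  | zero => simp [cycleWalk]
  | succ ℓ ih => simp [cycleWalk, ih]

theorem mk_add_mem_edges_cycleWalk (hN : 1 ≤ N) (u : Fin (N + 1)) {ℓ i : ℕ} (hi : i < ℓ) :
    s(u + i, u + i + 1) ∈ (cycleWalk hN u ℓ).edges := by
  induction ℓ generalizing u i with
  | zero => omega
  | succ ℓ ih =>
    rw [cycleWalk, Walk.edges_copy, Walk.edges_cons]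
    cases i with
    | zero => simp
    | succ i =>
      refine List.mem_cons_of_mem _ ?_
      rw [show u + ((i + 1 : ℕ) : Fin (N + 1)) = u + 1 + i by push_cast; ring]
      exact ih (u + 1) (by omega)

theorem mem_edges_cycleWalk (hN : 1 ≤ N) {u x : Fin (N + 1)} {ℓ : ℕ} (hx : (x - u).val < ℓ) :
    s(x, x + 1) ∈ (cycleWalk hN u ℓ).edges := by
  simpa using mk_add_mem_edges_cycleWalk hN u hx

theorem dist_cycleGraph_le_val_sub (hN : 1 ≤ N) (u v : Fin (N + 1)) :
    (cycleGraph (N + 1)).dist u v ≤ (v - u).val := by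
  have := dist_le ((cycleWalk hN u (v - u).val).copy rfl
    (by rw [Fin.cast_val_eq_self, add_sub_cancel]))
  rwa [Walk.length_copy, length_cycleWalk] at this

theorem dist_cycleGraph (hN : 1 ≤ N) (u v : Fin (N + 1)) :
    (cycleGraph (N + 1)).dist u v = (v - u).circNorm := by
  refine le_antisymm ?_ ?_
  · have hfwd := dist_cycleGraph_le_val_sub hN u v
    have hbwd := dist_comm ▸ dist_cycleGraph_le_val_sub hN v u
    rw [← neg_sub, Fin.val_neg] at hbwd
    unfold Fin.circNorm
    split_ifs at hbwd <;> omega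
  · obtain ⟨w, hw⟩ := cycleGraph_connected.exists_walk_length_eq_dist u v
    exact hw ▸ w.circNorm_le_length

variable {n : ℕ}

theorem dist_oddCycle_le (hn : 1 ≤ n) (u v : Fin (2 * n + 1)) :
    (cycleGraph (2 * n + 1)).dist u v ≤ n := by
  rw [dist_cycleGraph (by omega), Fin.circNorm]
  omega

theorem isKGeodesic_cycleWalk (hn : 1 ≤ n) (u : Fin (2 * n + 1)) :
    IsKGeodesic (cycleGraph (2 * n + 1)) n (cycleWalk (by omega) u n) := by
  refine ⟨length_cycleWalk _ u n, ?_⟩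
  rw [dist_cycleGraph (by omega), add_sub_cancel_left, Fin.circNorm,
    Fin.val_cast_of_lt (by omega)]
  omega

def oddCycleCover (hn : 1 ≤ n) :
    Fin 3 → Σ u v : Fin (2 * n + 1), (cycleGraph (2 * n + 1)).Walk u v :=
  fun i => ⟨_, _, cycleWalk (by omega) (((i : ℕ) * n : ℕ) : Fin (2 * n + 1)) n⟩

theorem isGeodesicCover_oddCycleCover (hn : 1 ≤ n) :
    IsGeodesicCover (cycleGraph (2 * n + 1)) n (oddCycleCover hn) := by
  refine ⟨fun i => isKGeodesic_cycleWalk hn _, fun e he => ?_⟩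
  obtain ⟨x, rfl⟩ := exists_eq_mk_add_one_of_mem_edgeSet he
  obtain ⟨i, hi⟩ : ∃ i : Fin 3, (i : ℕ) * n ≤ x.val ∧ x.val < (i : ℕ) * n + n := by
    have := x.isLt
    by_cases h₁ : x.val < n
    · exact ⟨0, by simp; omega⟩
    by_cases h₂ : x.val < 2 * n
    · exact ⟨1, by simp; omega⟩
    exact ⟨2, by simp; omega⟩
  have hstart : (((i : ℕ) * n : ℕ) : Fin (2 * n + 1)).val = (i : ℕ) * n :=
    Fin.val_cast_of_lt (by have := x.isLt; omega)
  refine ⟨i, mem_edges_cycleWalk (u := (((i : ℕ) * n : ℕ) : Fin (2 * n + 1))) _ ?_⟩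
  rw [Fin.coe_sub_iff_le.mpr (Fin.le_iff_val_le_val.mpr (by rw [hstart]; exact hi.1)), hstart]
  omega

end SimpleGraph

/-- For every integer `n ≥ 1`, the odd cycle `C_{2n+1}` is `[n]`-edge geodetic and the
minimum number of `n`-geodesics needed to cover all its edges is `3`. -/
theorem cycle_odd_maxEdgeGeodetic (n : ℕ) (hn : 1 ≤ n) :
    IsMaxEdgeGeodetic (cycleGraph (2 * n + 1)) n ∧ genNum (cycleGraph (2 * n + 1)) n = 3 := by
  have hcover := isGeodesicCover_oddCycleCover hn
  have hnot : ¬ IsEdgeGeodetic (cycleGraph (2 * n + 1)) (n + 1) :=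
    not_isEdgeGeodetic_of_dist_lt ⟨s(0, 0 + 1), cycleGraph_adj_add_one (by omega) 0⟩
      fun u v => Nat.lt_succ_of_le (dist_oddCycle_le hn u v)
  refine ⟨⟨hcover.isEdgeGeodetic, hnot⟩, le_antisymm hcover.genNum_le ?_⟩
  have hedges := hcover.ncard_edgeSet_le_genNum_mul
  rw [ncard_edgeSet_cycleGraph (by omega)] at hedges
  by_contra! h
  have := Nat.mul_le_mul_right n (Nat.le_of_lt_succ h)
  omega
end

section
/- Let T be a finite tree with at least one edge that is [k]-edge geodetic (where k is the minimum eccentricity over pendant vertices of T), and let S_T be the set of pendant vertices of T. Then ⌈|S_T|/2⌉ ≤ |gen(T)| ≤ |S_T| − 1, where |gen(T)| is the minimum number of k-geodesics of T whose edges together cover all edges of T. -/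
open SimpleGraph

/-- Eccentricity of a vertex: the maximum distance from it to any vertex. -/
noncomputable def eccent {V : Type*} [Fintype V] (G : SimpleGraph V) (v : V) : ℕ :=
  Finset.univ.sup (G.dist v)

/-!
A `k`-geodesic is a path, so a pendant vertex lying on it is one of its two ends; as the edge at
every pendant vertex has to be covered, a cover by `r` geodesics has at least `|S_T|` ends, so
`|S_T| ≤ 2r`.

For the upper bound fix a pendant vertex `v` with `e(v) = k`. For every other pendant vertex `u`
take a vertex `z_u` at distance `k` from `u` that is as close to `v` as possible, and the geodesic
from `z_u` to `u`. Given an edge `xy` with `x` nearer to `v`, let `u` be a vertex of the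
`y`-side farthest from `y`; it is pendant. Comparing `e(v) = k ≤ e(u)` with the heights of the
two sides of `xy` shows that some vertex of the `x`-side is at distance `k` from `u`, and a vertex
of the `y`-side at distance `k` from `u` would be farther from `v` than that one. So `z_u` lies on
the `x`-side and the geodesic from `z_u` to `u` runs through `xy`.
-/

def IsKGeodesicCover {V ι : Type*} (G : SimpleGraph V) (k : ℕ) (f : ι → Σ a b : V, G.Walk a b) :
    Prop :=
  (∀ i, IsKGeodesic G k (f i).2.2) ∧ ∀ e ∈ G.edgeSet, ∃ i, e ∈ (f i).2.2.edges

namespace SimpleGraph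

variable {V : Type*} {G : SimpleGraph V}

theorem Walk.dist_getVert_of_length_eq_dist {u v : V} {p : G.Walk u v}
    (hp : p.length = G.dist u v) {i : ℕ} (hi : i ≤ p.length) :
    G.dist u (p.getVert i) = i ∧ G.dist (p.getVert i) v = p.length - i := by
  have h₁ : G.dist u (p.getVert i) ≤ i := (dist_le (p.take i)).trans (by simp)
  have h₂ : G.dist (p.getVert i) v ≤ p.length - i := (dist_le (p.drop i)).trans (by simp)
  have h₃ := (p.take i).reachable.dist_triangle_left v
  omega

theorem Walk.dist_add_dist_of_mem_support {u v w : V} {p : G.Walk u v}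
    (hp : p.length = G.dist u v) (hw : w ∈ p.support) :
    G.dist u w + G.dist w v = G.dist u v := by
  obtain ⟨i, rfl, hi⟩ := Walk.mem_support_iff_exists_getVert.mp hw
  have := Walk.dist_getVert_of_length_eq_dist hp hi
  omega

theorem Reachable.exists_dist_eq_of_le {u v : V} (huv : G.Reachable u v) {j : ℕ}
    (hj : j ≤ G.dist u v) : ∃ w, G.dist u w = j ∧ G.dist u w + G.dist w v = G.dist u v := by
  obtain ⟨p, hp⟩ := huv.exists_walk_length_eq_dist
  refine ⟨p.getVert j, (Walk.dist_getVert_of_length_eq_dist hp (hp ▸ hj)).1,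
    Walk.dist_add_dist_of_mem_support hp (p.getVert_mem_support j)⟩

theorem dist_lt_of_mem_support_of_dist_lt {x y w z : V} {p : G.Walk w x}
    (hp : p.length = G.dist w x) (hz : z ∈ p.support) (h : G.dist w x < G.dist w y) :
    G.dist z x < G.dist z y := by
  classical
  have h₁ := Walk.dist_add_dist_of_mem_support hp hz
  have h₂ := (p.takeUntil z hz).reachable.dist_triangle_left y
  omega

theorem Walk.IsPath.eq_or_eq_of_degree_eq_one {u v w : V} {p : G.Walk u v} (hp : p.IsPath)
    (hw : w ∈ p.support) [Fintype (G.neighborSet w)] (hdeg : G.degree w = 1) :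
    w = u ∨ w = v := by
  by_contra! hne
  obtain ⟨i, rfl, hi⟩ := Walk.mem_support_iff_exists_getVert.mp hw
  have hi₀ : i ≠ 0 := by rintro rfl; exact hne.1 p.getVert_zero
  have hi₁ : i ≠ p.length := by rintro rfl; exact hne.2 p.getVert_length
  have hprev : G.Adj (p.getVert i) (p.getVert (i - 1)) := by
    simpa [Nat.sub_add_cancel (Nat.one_le_iff_ne_zero.mpr hi₀)] using
      (p.adj_getVert_succ (i := i - 1) (by omega)).symm
  have hnext : G.Adj (p.getVert i) (p.getVert (i + 1)) := p.adj_getVert_succ (by omega)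
  have hne' : p.getVert (i - 1) ≠ p.getVert (i + 1) := fun h => by
    have := hp.getVert_injOn (by simp only [Set.mem_ofPred_eq]; omega)
      (by simp only [Set.mem_ofPred_eq]; omega) h
    omega
  rw [← card_neighborFinset_eq_degree, Finset.card_eq_one] at hdeg
  obtain ⟨n, hn⟩ := hdeg
  have h₁ : p.getVert (i - 1) ∈ G.neighborFinset (p.getVert i) := by simpa using hprev
  have h₂ : p.getVert (i + 1) ∈ G.neighborFinset (p.getVert i) := by simpa using hnext
  rw [hn, Finset.mem_singleton] at h₁ h₂
  exact hne' (h₁.trans h₂.symm)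

theorem IsAcyclic.eq_of_length_eq_dist (hG : G.IsAcyclic) {u v : V} {p q : G.Walk u v}
    (hp : p.length = G.dist u v) (hq : q.length = G.dist u v) : p = q :=
  congrArg Subtype.val ((hG.subsingleton_path u v).elim
    ⟨p, p.isPath_of_length_eq_dist hp⟩ ⟨q, q.isPath_of_length_eq_dist hq⟩)

theorem IsAcyclic.length_eq_dist_of_isPath (hG : G.IsAcyclic) {u v : V} {p : G.Walk u v}
    (hp : p.IsPath) : p.length = G.dist u v := by
  obtain ⟨q, hq, hql⟩ := p.reachable.exists_path_of_dist
  have : p = q := congrArg Subtype.val ((hG.subsingleton_path u v).elim ⟨p, hp⟩ ⟨q, hq⟩)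
  rw [this, hql]

theorem IsTree.mem_edges_of_dist_add_one_add_dist (hT : G.IsTree) {a b x y : V}
    {p : G.Walk a b} (hp : p.length = G.dist a b) (hxy : G.Adj x y)
    (h : G.dist a x + 1 + G.dist y b = G.dist a b) : s(x, y) ∈ p.edges := by
  obtain ⟨q₁, hq₁⟩ := hT.connected.exists_walk_length_eq_dist a x
  obtain ⟨q₂, hq₂⟩ := hT.connected.exists_walk_length_eq_dist y b
  set r := q₁.append (Walk.cons hxy q₂)
  have hr : r.length = G.dist a b := by
    simp only [r, Walk.length_append, Walk.length_cons, hq₁, hq₂, ← h]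
    omega
  simp [hT.isAcyclic.eq_of_length_eq_dist hp hr, r]

theorem IsTree.dist_eq_dist_add_one_add_dist (hT : G.IsTree) {x y w w' : V} (hxy : G.Adj x y)
    (hw : G.dist w x < G.dist w y) (hw' : G.dist w' y < G.dist w' x) :
    G.dist w w' = G.dist w x + 1 + G.dist y w' := by
  obtain ⟨q₁, hq₁⟩ := hT.connected.exists_walk_length_eq_dist w x
  obtain ⟨q₂, hq₂⟩ := hT.connected.exists_walk_length_eq_dist w' y
  set r := q₁.append (Walk.cons hxy q₂.reverse)
  -- every vertex of `q₁` is closer to `x` than to `y`, every vertex of `q₂` the other way round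
  have hdisj : q₁.support.Disjoint q₂.support := fun z hz₁ hz₂ =>
    (dist_lt_of_mem_support_of_dist_lt hq₁ hz₁ hw).asymm
      (dist_lt_of_mem_support_of_dist_lt hq₂ hz₂ hw')
  have hr : r.IsPath := by
    rw [Walk.isPath_def]
    simp only [r, Walk.support_append, Walk.support_cons, List.tail_cons, Walk.support_reverse]
    exact List.nodup_append.mpr ⟨(q₁.isPath_of_length_eq_dist hq₁).support_nodup,
      List.nodup_reverse.mpr (q₂.isPath_of_length_eq_dist hq₂).support_nodup,
      fun a ha b hb => by rintro rfl; exact hdisj ha (List.mem_reverse.mp hb)⟩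
  rw [← hT.isAcyclic.length_eq_dist_of_isPath hr]
  simp only [r, Walk.length_append, Walk.length_cons, Walk.length_reverse, hq₁, hq₂,
    dist_comm (u := w') (v := y)]
  omega

theorem IsTree.eq_of_adj_of_dist_add_one_eq (hT : G.IsTree) {v u n₁ n₂ : V}
    (h₁ : G.Adj n₁ u) (h₂ : G.Adj n₂ u) (hd₁ : G.dist v n₁ + 1 = G.dist v u)
    (hd₂ : G.dist v n₂ + 1 = G.dist v u) : n₁ = n₂ := by
  obtain ⟨p₁, hp₁⟩ := hT.connected.exists_walk_length_eq_dist v n₁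
  obtain ⟨p₂, hp₂⟩ := hT.connected.exists_walk_length_eq_dist v n₂
  have hq₁ : (p₁.concat h₁).length = G.dist v u := by simp [hp₁, hd₁]
  have hq₂ : (p₂.concat h₂).length = G.dist v u := by simp [hp₂, hd₂]
  exact (Walk.concat_inj (hT.isAcyclic.eq_of_length_eq_dist hq₁ hq₂)).1

theorem IsTree.degree_eq_one_of_forall_adj_dist_le (hT : G.IsTree) {u v : V}
    [Fintype (G.neighborSet u)] (hne : u ≠ v) (h : ∀ n, G.Adj u n → G.dist v n ≤ G.dist v u) :
    G.degree u = 1 := by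
  have hcloser : ∀ n, G.Adj u n → G.dist v n + 1 = G.dist v u := fun n hn => by
    have := hT.dist_eq_dist_add_one_of_adj v hn
    have := h n hn
    omega
  obtain ⟨p, hp⟩ := hT.connected.exists_walk_length_eq_dist u v
  have hnil : ¬p.Nil := fun hnil => hne hnil.eq
  rw [degree_eq_one_iff_existsUnique_adj]
  exact ⟨p.snd, p.adj_snd hnil, fun n hn => hT.eq_of_adj_of_dist_add_one_eq hn.symm
    (p.adj_snd hnil).symm (hcloser n hn) (hcloser _ (p.adj_snd hnil))⟩

section EdgeSides

/-! For an edge `xy` of a tree, `G.dist w x < G.dist w y` says that `w` lies on the `x`-side. -/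

variable {x y : V}

theorem IsTree.degree_eq_one_of_forall_dist_le (hT : G.IsTree) (hxy : G.Adj x y) {u : V}
    [Fintype (G.neighborSet u)] (hu : G.dist u y < G.dist u x)
    (hmax : ∀ w, G.dist w y < G.dist w x → G.dist y w ≤ G.dist y u) : G.degree u = 1 := by
  have hx : G.dist x x < G.dist x y := by simp [dist_eq_one_iff_adj.mpr hxy]
  have hxu : G.dist x u = 1 + G.dist y u := by
    simpa using hT.dist_eq_dist_add_one_add_dist hxy hx hu
  refine hT.degree_eq_one_of_forall_adj_dist_le (v := x) (fun h => by simp [h] at hu)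
    fun n hn => ?_
  rcases lt_or_gt_of_ne (hT.dist_ne_of_adj n hxy) with hnx | hny
  · have : G.dist n u = G.dist n x + 1 + G.dist y u := hT.dist_eq_dist_add_one_add_dist hxy hnx hu
    have : G.dist n u = 1 := dist_eq_one_iff_adj.mpr hn.symm
    have : G.dist x n = G.dist n x := dist_comm
    omega
  · have : G.dist x n = 1 + G.dist y n := by
      simpa using hT.dist_eq_dist_add_one_add_dist hxy hx hny
    have := hmax n hny
    omega

theorem IsTree.dist_le_dist_add_max (hT : G.IsTree) (hxy : G.Adj x y) {hy hx : ℕ}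
    (hhy : ∀ w, G.dist w y < G.dist w x → G.dist y w ≤ hy)
    (hhx : ∀ w, G.dist w x < G.dist w y → G.dist x w ≤ hx)
    {w : V} (hw : G.dist w y < G.dist w x) (c : V) :
    G.dist w c ≤ G.dist w y + max hy (hx + 1) := by
  rcases lt_or_gt_of_ne (hT.dist_ne_of_adj c hxy) with hcx | hcy
  · have : G.dist c w = G.dist c x + 1 + G.dist y w := hT.dist_eq_dist_add_one_add_dist hxy hcx hw
    have := hhx c hcx
    have : G.dist c w = G.dist w c := dist_comm
    have : G.dist c x = G.dist x c := dist_comm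
    have : G.dist y w = G.dist w y := dist_comm
    omega
  · have : G.dist w c ≤ G.dist w y + G.dist y c := hT.connected.dist_triangle
    have := hhy c hcy
    omega

theorem IsTree.dist_lt_of_isMinOn_dist (hT : G.IsTree) (hxy : G.Adj x y) {k : ℕ} {u v a z : V}
    (hv : G.dist v x < G.dist v y) (hu : G.dist u y < G.dist u x) (hvu : G.dist v u ≤ k)
    (ha : G.dist a x < G.dist a y) (hka : k ≤ G.dist u a) (hz : G.dist z u = k)
    (hmin : ∀ z', G.dist z' u = k → G.dist v z ≤ G.dist v z') : G.dist z x < G.dist z y := by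
  obtain ⟨z', hz'u, hz'a⟩ := (hT.connected u a).exists_dist_eq_of_le hka
  have : G.dist a u = G.dist a x + 1 + G.dist y u := hT.dist_eq_dist_add_one_add_dist hxy ha hu
  have : G.dist v u = G.dist v x + 1 + G.dist y u := hT.dist_eq_dist_add_one_add_dist hxy hv hu
  have : G.dist a u = G.dist u a := dist_comm
  have : G.dist a z' = G.dist z' a := dist_comm
  have hz' : G.dist z' x < G.dist z' y := by
    by_contra! h
    have : G.dist a z' = G.dist a x + 1 + G.dist y z' :=
      hT.dist_eq_dist_add_one_add_dist hxy ha (lt_of_le_of_ne h (hT.dist_ne_of_adj z' hxy).symm)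
    omega
  by_contra! h
  have : G.dist v z = G.dist v x + 1 + G.dist y z :=
    hT.dist_eq_dist_add_one_add_dist hxy hv (lt_of_le_of_ne h (hT.dist_ne_of_adj z hxy).symm)
  have : G.dist z' u = G.dist z' x + 1 + G.dist y u := hT.dist_eq_dist_add_one_add_dist hxy hz' hu
  have : G.dist v z' ≤ G.dist v x + G.dist x z' := hT.connected.dist_triangle
  have : G.dist z u ≤ G.dist z y + G.dist y u := hT.connected.dist_triangle
  have : G.dist z' u = G.dist u z' := dist_comm
  have : G.dist x z' = G.dist z' x := dist_comm
  have : G.dist y z = G.dist z y := dist_comm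
  have := hmin z' (by omega)
  omega

end EdgeSides

theorem IsTree.exists_degree_eq_one_forall_dist_eq [Fintype V] [DecidableRel G.Adj]
    (hT : G.IsTree) {k : ℕ} {v : V} (hvk : ∀ w, G.dist v w ≤ k) (hv : ∃ c, k ≤ G.dist v c)
    (hleaf : ∀ u, G.degree u = 1 → ∃ c, k ≤ G.dist u c) {x y : V} (hxy : G.Adj x y)
    (hvx : G.dist v x < G.dist v y) :
    ∃ u, G.degree u = 1 ∧ u ≠ v ∧ ∀ z, G.dist z u = k →
      (∀ z', G.dist z' u = k → G.dist v z ≤ G.dist v z') →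
        G.dist z x + 1 + G.dist y u = G.dist z u := by
  obtain ⟨u, hu, humax⟩ := Finset.exists_max_image
    (Finset.univ.filter fun w => G.dist w y < G.dist w x) (G.dist y)
    ⟨y, by simp [dist_eq_one_iff_adj.mpr hxy.symm]⟩
  obtain ⟨a, ha, hamax⟩ := Finset.exists_max_image
    (Finset.univ.filter fun w => G.dist w x < G.dist w y) (G.dist x)
    ⟨x, by simp [dist_eq_one_iff_adj.mpr hxy]⟩
  simp only [Finset.mem_filter, Finset.mem_univ, true_and] at hu ha humax hamax
  have hudeg := hT.degree_eq_one_of_forall_dist_le hxy hu humax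
  have hka : k ≤ G.dist u a := by
    obtain ⟨c, hc⟩ := hleaf u hudeg
    obtain ⟨c', hc'⟩ := hv
    have := hT.dist_le_dist_add_max hxy humax hamax hu c
    have := hT.dist_le_dist_add_max hxy.symm hamax humax hvx c'
    have : G.dist a u = G.dist a x + 1 + G.dist y u := hT.dist_eq_dist_add_one_add_dist hxy ha hu
    have : G.dist a u = G.dist u a := dist_comm
    have : G.dist u y = G.dist y u := dist_comm
    have : G.dist v x = G.dist x v := dist_comm
    have : G.dist a x = G.dist x a := dist_comm
    have := hamax v hvx
    omega
  refine ⟨u, hudeg, fun h => by subst h; omega, fun z hz hmin => ?_⟩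
  have hzx := hT.dist_lt_of_isMinOn_dist hxy hvx hu (hvk u) ha hka hz hmin
  exact (hT.dist_eq_dist_add_one_add_dist hxy hzx hu).symm

theorem IsTree.exists_isKGeodesicCover [Fintype V] [DecidableEq V] [DecidableRel G.Adj]
    (hT : G.IsTree) {k : ℕ} {v : V} (hvk : ∀ w, G.dist v w ≤ k) (hv : ∃ c, k ≤ G.dist v c)
    (hleaf : ∀ u, G.degree u = 1 → ∃ c, k ≤ G.dist u c) :
    ∃ g : {u // u ∈ (Finset.univ.filter fun u => G.degree u = 1).erase v} →
      Σ a b : V, G.Walk a b, IsKGeodesicCover G k g := by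
  have hstart : ∀ u : {u // u ∈ (Finset.univ.filter fun u => G.degree u = 1).erase v},
      ∃ (z : V) (p : G.Walk z u), p.length = k ∧ G.dist z u = k ∧
        ∀ z', G.dist z' u = k → G.dist v z ≤ G.dist v z' := by
    rintro ⟨u, hu⟩
    obtain ⟨c, hc⟩ := hleaf u (by simpa using Finset.mem_of_mem_erase hu)
    obtain ⟨z₀, hz₀, -⟩ := (hT.connected u c).exists_dist_eq_of_le hc
    obtain ⟨z, hz, hzmin⟩ := Finset.exists_min_image
      (Finset.univ.filter fun z => G.dist z u = k) (G.dist v) ⟨z₀, by simp [dist_comm, hz₀]⟩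
    simp only [Finset.mem_filter, Finset.mem_univ, true_and] at hz hzmin
    obtain ⟨p, hp⟩ := hT.connected.exists_walk_length_eq_dist z u
    exact ⟨z, p, hp.trans hz, hz, hzmin⟩
  choose z p hpk hz hzmin using hstart
  refine ⟨fun u => ⟨z u, u, p u⟩, fun u => ⟨hpk u, hz u⟩, fun e he => ?_⟩
  induction e using Sym2.ind with | h x y => ?_
  rw [mem_edgeSet] at he
  wlog hvx : G.dist v x < G.dist v y generalizing x y
  · rw [Sym2.eq_swap]
    exact this y x he.symm (by have := hT.dist_eq_dist_add_one_of_adj v he; omega)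
  obtain ⟨u, hudeg, huv, hcov⟩ :=
    hT.exists_degree_eq_one_forall_dist_eq hvk hv hleaf he hvx
  have hu : u ∈ (Finset.univ.filter fun u => G.degree u = 1).erase v := by simp [hudeg, huv]
  exact ⟨⟨u, hu⟩, hT.mem_edges_of_dist_add_one_add_dist ((hpk _).trans (hz _).symm) he
    (hcov (z ⟨u, hu⟩) (hz ⟨u, hu⟩) (hzmin ⟨u, hu⟩))⟩

end SimpleGraph

namespace IsKGeodesicCover

variable {V ι : Type*} {G : SimpleGraph V} {k : ℕ} {f : ι → Σ a b : V, G.Walk a b}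

theorem exists_fin_card [Fintype ι] (hf : IsKGeodesicCover G k f) :
    ∃ f' : Fin (Fintype.card ι) → Σ a b : V, G.Walk a b, IsKGeodesicCover G k f' :=
  ⟨f ∘ (Fintype.equivFin ι).symm, fun i => hf.1 _, fun e he => by
    obtain ⟨i, hi⟩ := hf.2 e he
    exact ⟨Fintype.equivFin ι i, by rw [Function.comp_apply, Equiv.symm_apply_apply]; exact hi⟩⟩

theorem genNum_le [Fintype ι] (hf : IsKGeodesicCover G k f) : genNum G k ≤ Fintype.card ι :=
  Nat.sInf_le hf.exists_fin_card

theorem exists_fin_genNum [Fintype ι] (hf : IsKGeodesicCover G k f) :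
    ∃ f' : Fin (genNum G k) → Σ a b : V, G.Walk a b, IsKGeodesicCover G k f' :=
  Nat.sInf_mem (s := {r | ∃ f' : Fin r → Σ a b : V, G.Walk a b, IsKGeodesicCover G k f'})
    ⟨_, hf.exists_fin_card⟩

theorem card_filter_degree_eq_one_le [Fintype V] [DecidableEq V] [DecidableRel G.Adj]
    [Fintype ι] (hf : IsKGeodesicCover G k f) :
    (Finset.univ.filter fun v => G.degree v = 1).card ≤ 2 * Fintype.card ι := by
  have hsub : (Finset.univ.filter fun v => G.degree v = 1) ⊆
      Finset.univ.biUnion fun i => {(f i).1, (f i).2.1} := by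
    intro u hu
    simp only [Finset.mem_filter, Finset.mem_univ, true_and] at hu
    obtain ⟨n, hn⟩ := (G.degree_pos_iff_exists_adj u).mp (by omega)
    obtain ⟨i, hi⟩ := hf.2 s(u, n) hn
    have hpath := (f i).2.2.isPath_of_length_eq_dist ((hf.1 i).1.trans (hf.1 i).2.symm)
    simp only [Finset.mem_biUnion, Finset.mem_univ, true_and, Finset.mem_insert,
      Finset.mem_singleton]
    exact ⟨i, hpath.eq_or_eq_of_degree_eq_one ((f i).2.2.fst_mem_support_of_mem_edges hi) hu⟩
  calc _ ≤ _ := Finset.card_le_card hsub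
    _ ≤ ∑ i, ({(f i).1, (f i).2.1} : Finset V).card := Finset.card_biUnion_le
    _ ≤ ∑ _i : ι, 2 := Finset.sum_le_sum fun i _ => Finset.card_le_two
    _ = 2 * Fintype.card ι := by simp [mul_comm]

end IsKGeodesicCover

theorem dist_le_eccent {V : Type*} [Fintype V] (G : SimpleGraph V) (v w : V) :
    G.dist v w ≤ _root_.eccent G v :=
  Finset.le_sup (Finset.mem_univ w)

theorem exists_dist_eq_eccent {V : Type*} [Fintype V] [Nonempty V] (G : SimpleGraph V) (v : V) :
    ∃ c, _root_.eccent G v = G.dist v c := by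
  obtain ⟨c, -, hc⟩ := Finset.exists_mem_eq_sup Finset.univ Finset.univ_nonempty (G.dist v)
  exact ⟨c, hc⟩

/-- For a tree `T` with at least one edge, which is `[k]`-edge geodetic for `k` the minimum
eccentricity over pendant vertices, the minimum number of `k`-geodesics covering all edges
of `T` lies between `⌈|S_T| / 2⌉` and `|S_T| - 1`, where `S_T` is the set of pendant
vertices of `T`. -/
theorem tree_genNum_bounds {V : Type*} [Fintype V] [DecidableEq V]
    (G : SimpleGraph V) [DecidableRel G.Adj]
    (hT : G.IsTree) (hE : G.edgeSet.Nonempty)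
    (k : ℕ) (hk : k = sInf {d : ℕ | ∃ v : V, G.degree v = 1 ∧ _root_.eccent G v = d}) :
    ⌈((Finset.univ.filter fun v : V => G.degree v = 1).card : ℚ) / 2⌉₊ ≤ genNum G k ∧
      genNum G k ≤ (Finset.univ.filter fun v : V => G.degree v = 1).card - 1 := by
  obtain ⟨x, y, hxy⟩ : ∃ x y, G.Adj x y := by
    obtain ⟨e, he⟩ := hE
    induction e using Sym2.ind with | h x y => exact ⟨x, y, he⟩
  have : Nontrivial V := ⟨x, y, hxy.ne⟩
  obtain ⟨u₀, hu₀⟩ := hT.exists_vert_degree_one_of_nontrivial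
  obtain ⟨v, hvdeg, hvk⟩ : ∃ v, G.degree v = 1 ∧ _root_.eccent G v = k :=
    hk ▸ Nat.sInf_mem (s := {d | ∃ v, G.degree v = 1 ∧ _root_.eccent G v = d}) ⟨_, u₀, hu₀, rfl⟩
  have hleaf : ∀ u, G.degree u = 1 → ∃ c, k ≤ G.dist u c := fun u hu => by
    obtain ⟨c, hc⟩ := exists_dist_eq_eccent G u
    exact ⟨c, hc ▸ hk ▸ Nat.sInf_le ⟨u, hu, rfl⟩⟩
  obtain ⟨g, hg⟩ := hT.exists_isKGeodesicCover (fun w => hvk ▸ dist_le_eccent G v w)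
    (hvk ▸ (exists_dist_eq_eccent G v).imp fun _ => le_of_eq) hleaf
  obtain ⟨f, hf⟩ := hg.exists_fin_genNum
  constructor
  · rw [Nat.ceil_le, div_le_iff₀ two_pos]
    exact_mod_cast hf.card_filter_degree_eq_one_le.trans_eq (by simp [mul_comm])
  · refine hg.genNum_le.trans_eq ?_
    rw [Fintype.card_coe, Finset.card_erase_of_mem (by simpa using hvdeg)]
end
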